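/- Let P0⁺, P1⁺, P2⁺, P0⁻, P1⁻, P2⁻ be finite sets of propositional variables such that P0⁺, P1⁺, P2⁺ are pairwise disjoint and P0⁻, P1⁻, P2⁻ are pairwise disjoint, and let V0 and V1 be truth assignments. If V0 →₀^{(P1⁺,P1⁻)} V1, then there exists a truth assignment V* such that V0 →₀^{(P0⁺∪P1⁺, P0⁻∪P1⁻)} V* and V* →₀^{(P1⁺∪P2⁺, P1⁻∪P2⁻)} V1. -/
import Mathlib


/-- Propositional formulas over countably many variables. -/
inductive PropForm : Type where
  | var : ℕ → PropForm
  | bot : PropForm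
  | and : PropForm → PropForm → PropForm
  | or : PropForm → PropForm → PropForm
  | not : PropForm → PropForm
  | imp : PropForm → PropForm → PropForm

namespace PropForm

mutual
  /-- positively occurring variables -/
  def vpos : PropForm → Finset ℕ
    | var p => {p}
    | bot => ∅
    | and φ ψ => vpos φ ∪ vpos ψ
    | or φ ψ => vpos φ ∪ vpos ψ
    | not φ => vneg φ
    | imp φ ψ => vneg φ ∪ vpos ψ
  /-- negatively occurring variables -/
  def vneg : PropForm → Finset ℕ
    | var _ => ∅
    | bot => ∅
    | and φ ψ => vneg φ ∪ vneg ψ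
    | or φ ψ => vneg φ ∪ vneg ψ
    | not φ => vpos φ
    | imp φ ψ => vpos φ ∪ vneg ψ
end

/-- Classical evaluation of a formula under a truth assignment. -/
def eval (V : ℕ → Bool) : PropForm → Bool
  | var p => V p
  | bot => false
  | and φ ψ => eval V φ && eval V ψ
  | or φ ψ => eval V φ || eval V ψ
  | not φ => !(eval V φ)
  | imp φ ψ => !(eval V φ) || eval V ψ

end PropForm

/-- `V0 →₀^{(P⁺,P⁻)} V1`: every `(P⁺,P⁻)`-formula true under `V0` is true under `V1`. -/
def PropArrow (Pp Pm : Finset ℕ) (V0 V1 : ℕ → Bool) : Prop :=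
  ∀ φ : PropForm, φ.vpos ⊆ Pp → φ.vneg ⊆ Pm → φ.eval V0 = true → φ.eval V1 = true

/-- A tautology of classical propositional logic. -/
def Tautology (φ : PropForm) : Prop := ∀ V : ℕ → Bool, φ.eval V = true

lemma mono (φ : PropForm) : ∀ (V V' : ℕ → Bool),
    (∀ p ∈ φ.vpos, V p = true → V' p = true) →
    (∀ p ∈ φ.vneg, V' p = true → V p = true) →
    φ.eval V = true → φ.eval V' = true := by
  induction φ with
  | var p =>
    intro V V' hp _ h
    exact hp p (by simp [PropForm.vpos]) h
  | bot => intro V V' _ _ h; simp [PropForm.eval] at h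
  | and φ ψ ihφ ihψ =>
    intro V V' hp hm h
    simp only [PropForm.eval, Bool.and_eq_true] at h ⊢
    simp only [PropForm.vpos, PropForm.vneg, Finset.mem_union] at hp hm
    exact ⟨ihφ V V' (fun p hh => hp p (Or.inl hh)) (fun p hh => hm p (Or.inl hh)) h.1,
           ihψ V V' (fun p hh => hp p (Or.inr hh)) (fun p hh => hm p (Or.inr hh)) h.2⟩
  | or φ ψ ihφ ihψ =>
    intro V V' hp hm h
    simp only [PropForm.eval, Bool.or_eq_true] at h ⊢
    simp only [PropForm.vpos, PropForm.vneg, Finset.mem_union] at hp hm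
    rcases h with h | h
    · exact Or.inl (ihφ V V' (fun p hh => hp p (Or.inl hh)) (fun p hh => hm p (Or.inl hh)) h)
    · exact Or.inr (ihψ V V' (fun p hh => hp p (Or.inr hh)) (fun p hh => hm p (Or.inr hh)) h)
  | not φ ihφ =>
    intro V V' hp hm h
    simp only [PropForm.eval, Bool.not_eq_true', Bool.not_eq_true] at h ⊢
    simp only [PropForm.vpos, PropForm.vneg] at hp hm
    by_contra hc
    have := ihφ V' V hm hp (by revert hc; cases φ.eval V' <;> simp)
    rw [h] at this; exact absurd this (by simp)
  | imp φ ψ ihφ ihψ =>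
    intro V V' hp hm h
    simp only [PropForm.eval, Bool.or_eq_true, Bool.not_eq_true'] at h ⊢
    simp only [PropForm.vpos, PropForm.vneg, Finset.mem_union] at hp hm
    rcases h with h | h
    · by_cases hc : φ.eval V' = true
      · have := ihφ V' V (fun p hh => hm p (Or.inl hh)) (fun p hh => hp p (Or.inl hh)) hc
        rw [h] at this; exact absurd this (by simp)
      · exact Or.inl (by simpa using hc)
    · exact Or.inr (ihψ V V' (fun p hh => hp p (Or.inr hh)) (fun p hh => hm p (Or.inr hh)) h)


lemma propArrow_of_pointwise (Pp Pm : Finset ℕ) (V V' : ℕ → Bool)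
    (hp : ∀ p ∈ Pp, V p = true → V' p = true)
    (hm : ∀ p ∈ Pm, V' p = true → V p = true) :
    PropArrow Pp Pm V V' := by
  intro φ hφp hφm hev
  exact mono φ V V' (fun p hh => hp p (hφp hh)) (fun p hh => hm p (hφm hh)) hev

theorem stmt0
    (P0p P1p P2p P0m P1m P2m : Finset ℕ)
    (hp01 : Disjoint P0p P1p) (hp02 : Disjoint P0p P2p) (hp12 : Disjoint P1p P2p)
    (hm01 : Disjoint P0m P1m) (hm02 : Disjoint P0m P2m) (hm12 : Disjoint P1m P2m)
    (V0 V1 : ℕ → Bool)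
    (h : PropArrow P1p P1m V0 V1) :
    ∃ V : ℕ → Bool,
      PropArrow (P0p ∪ P1p) (P0m ∪ P1m) V0 V ∧
      PropArrow (P1p ∪ P2p) (P1m ∪ P2m) V V1 := by

  have h1 : ∀ p ∈ P1p, V0 p = true → V1 p = true := by
    intro p hp hv
    exact h (PropForm.var p) (by simpa [PropForm.vpos] using hp) (by simp [PropForm.vneg]) hv
  have h2 : ∀ p ∈ P1m, V1 p = true → V0 p = true := by
    intro p hp hv
    have := h (PropForm.not (PropForm.var p)) (by simp [PropForm.vpos, PropForm.vneg])
      (by simpa [PropForm.vpos, PropForm.vneg] using hp)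
    simp only [PropForm.eval, Bool.not_eq_true', Bool.not_eq_true] at this
    by_contra hc
    have h0 : V0 p = false := by revert hc; cases V0 p <;> simp
    have := this h0
    rw [hv] at this; exact absurd this (by simp)
  refine ⟨fun p => (decide (p ∈ P0p ∪ P1p) && V0 p) || (decide (p ∈ P1m ∪ P2m) && V1 p),
    propArrow_of_pointwise _ _ _ _ ?_ ?_, propArrow_of_pointwise _ _ _ _ ?_ ?_⟩
  · intro p hp hv
    simp only [Bool.or_eq_true, Bool.and_eq_true, decide_eq_true_eq]
    exact Or.inl ⟨hp, hv⟩
  · intro p hp hv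
    simp only [Bool.or_eq_true, Bool.and_eq_true, decide_eq_true_eq] at hv
    rcases hv with ⟨_, hv⟩ | ⟨hmem, hv⟩
    · exact hv
    · rcases Finset.mem_union.mp hp with hp0 | hp1
      · rcases Finset.mem_union.mp hmem with hm | hm
        · exact absurd hm (Finset.disjoint_left.mp hm01 hp0)
        · exact absurd hm (Finset.disjoint_left.mp hm02 hp0)
      · rcases Finset.mem_union.mp hmem with hm | hm
        · exact h2 p hm hv
        · exact absurd hm (Finset.disjoint_left.mp hm12 hp1)
  · intro p hp hv
    simp only [Bool.or_eq_true, Bool.and_eq_true, decide_eq_true_eq] at hv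
    rcases hv with ⟨hmem, hv⟩ | ⟨_, hv⟩
    · rcases Finset.mem_union.mp hp with hp1 | hp2
      · rcases Finset.mem_union.mp hmem with hm | hm
        · exact absurd hp1 (Finset.disjoint_left.mp hp01 hm)
        · exact h1 p hp1 hv
      · rcases Finset.mem_union.mp hmem with hm | hm
        · exact absurd hp2 (Finset.disjoint_left.mp hp02 hm)
        · exact absurd hp2 (Finset.disjoint_left.mp hp12 hm)
    · exact hv
  · intro p hp hv
    simp only [Bool.or_eq_true, Bool.and_eq_true, decide_eq_true_eq]
    exact Or.inr ⟨hp, hv⟩
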